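/- Suppose 0 ≤ δ_m ≤ (1 − q)^{m−1} δ₁ for all m ≥ 1 with 0 < q ≤ 1 and ‖δ₁‖² ≤ 4Γ². Combining with the quadratic bound from C-smoothness, ℒ(W_{t+1}) − ℒ(W_{t+1}*) ≤ (C/2)·4Γ²·(1 − q)^M for the iterate after M inner steps, i.e., the per-round utility-loss gap satisfies ε_u(α_t) − ε_u(α_t*) ≤ 2CΓ²(1 − R/L)^M with q = R/L. -/
import Mathlib

/-- Per-round utility-loss gap bound (Theorem 1, near-optimality). -/
theorem stmt_13 {d : ℕ} (ℒ : EuclideanSpace ℝ (Fin d) → ℝ)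
    (C Γ q : ℝ) (hC : 0 ≤ C) (hq : 0 < q) (hq1 : q ≤ 1) (M : ℕ)
    (W' W'star : EuclideanSpace ℝ (Fin d))
    (hsmooth : ℒ W' - ℒ W'star ≤ C / 2 * ‖W' - W'star‖ ^ 2)
    (δ₁ δstar : EuclideanSpace ℝ (Fin d))
    (hcontract : ‖W' - W'star‖ ^ 2 ≤ (1 - q) ^ M * ‖δ₁ - δstar‖ ^ 2)
    (hΓ : ‖δ₁ - δstar‖ ≤ 2 * Γ) :
    ℒ W' - ℒ W'star ≤ 2 * C * Γ ^ 2 * (1 - q) ^ M := by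
  have hn : (0:ℝ) ≤ ‖δ₁ - δstar‖ := norm_nonneg _
  have hpow : (0:ℝ) ≤ (1 - q) ^ M := pow_nonneg (by linarith) M
  have hsq : ‖δ₁ - δstar‖ ^ 2 ≤ 4 * Γ ^ 2 := by nlinarith
  nlinarith [mul_le_mul_of_nonneg_left hsq hpow]
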